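/- Let A=(ρ,s,s',{V_j},{r_j}) be an atlas in ℝ^N, ω a modulus of continuity and M>0, and let Ã=(ρ/2, s, s', {(V_j)_{ρ/2}}, {r_j}) be the derived atlas. Then there exists a constant c>0, depending only on N, A, ω and M, such that for all Ω₁,Ω₂∈C_M^{ω}(A) (which also belong to C(Ã)): d^{HP}(∂Ω₁,∂Ω₂) ≤ d_{Ã}(Ω₁,Ω₂) ≤ c·ω(d_{HP}(∂Ω₁,∂Ω₂)), where d^{HP} is the Hausdorff–Pompeiu distance and d_{HP} the lower Hausdorff–Pompeiu deviation. -/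

import Mathlib

open MeasureTheory Set Filter
noncomputable section
open scoped Classical

abbrev EV (N : ℕ) := EuclideanSpace ℝ (Fin N)

def ebasis (N : ℕ) (i : Fin N) : EV N := EuclideanSpace.single i 1

/-- partial derivative of a scalar function in the `i`-th coordinate direction -/
def pder {N : ℕ} (i : Fin N) (f : EV N → ℝ) : EV N → ℝ :=
  fun x => fderiv ℝ f x (ebasis N i)

/-- `(i,j)` entry of the Jacobian matrix of `β` at `x` -/
def jacEntry {N : ℕ} (β : EV N → EV N) (x : EV N) (i j : Fin N) : ℝ :=
  fderiv ℝ β x (ebasis N j) i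

/-- squared Frobenius norm of the Jacobian matrix of `β` at `x` -/
def frobSq {N : ℕ} (β : EV N → EV N) (x : EV N) : ℝ :=
  ∑ i, ∑ j, (jacEntry β x i j)^2

/-- divergence of `β` at `x` -/
def divg {N : ℕ} (β : EV N → EV N) (x : EV N) : ℝ :=
  ∑ i, jacEntry β x i i

/-- An atlas in `ℝ^N`: `s` rotated cuboids, described by boxes `∏ (a j i, b j i)`
and isometries `r j`, with parameter `ρ` and `s'` boundary charts (so that
`V j := (r j)⁻¹ (box j)` and `r j (V j)` is the box). -/
structure Atlas (N : ℕ) where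
  dimpos : 0 < N
  ρ : ℝ
  ρpos : 0 < ρ
  s : ℕ
  spos : 0 < s
  s' : ℕ
  s'le : s' ≤ s
  a : Fin s → Fin N → ℝ
  b : Fin s → Fin N → ℝ
  ab : ∀ j i, a j i < b j i
  r : Fin s → (EV N ≃ᵢ EV N)

namespace Atlas

variable {N : ℕ} (A : Atlas N)

/-- the index of the last coordinate -/
def last : Fin N := ⟨N - 1, Nat.sub_lt A.dimpos Nat.one_pos⟩

/-- the box `r j (V j)` -/
def box (j : Fin A.s) : Set (EV N) :=
  {x | ∀ i, A.a j i < x i ∧ x i < A.b j i}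

/-- the cuboid `V j` -/
def V (j : Fin A.s) : Set (EV N) := (A.r j).symm '' A.box j

/-- the open cylinder `W_j × ℝ` (in the rotated coordinates of the `j`-th chart) -/
def cyl (j : Fin A.s) : Set (EV N) :=
  {x | ∀ i, i ≠ A.last → (A.a j i < x i ∧ x i < A.b j i)}

/-- the closed cylinder `cl(W_j) × ℝ` (in the rotated coordinates of the `j`-th chart) -/
def cylClosed (j : Fin A.s) : Set (EV N) :=
  {x | ∀ i, i ≠ A.last → (A.a j i ≤ x i ∧ x i ≤ A.b j i)}

end Atlas

/-- `(V)_δ = {x ∈ V : d(x, ∂V) > δ}` -/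
def innerPart {N : ℕ} (V : Set (EV N)) (δ : ℝ) : Set (EV N) :=
  {x ∈ V | δ < Metric.infDist x (frontier V)}

/-- `(V)^δ = {x : d(x,V) < δ}` -/
def outerPart {N : ℕ} (V : Set (EV N)) (δ : ℝ) : Set (EV N) :=
  {x | Metric.infDist x V < δ}

/-- the describing functions `g j` of `Ω` relative to the atlas `A`:
in the rotated coordinates of the `j`-th chart, `Ω ∩ V j` is the subgraph of `g j`,
a continuous function of the first `N-1` coordinates, with the required bounds. -/
structure AtlasDescribes {N : ℕ} (A : Atlas N) (Ω : Set (EV N))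
    (g : Fin A.s → EV N → ℝ) : Prop where
  cont : ∀ j, ContinuousOn (g j) (A.cylClosed j)
  barOnly : ∀ j (x y : EV N), (∀ i, i ≠ A.last → x i = y i) → g j x = g j y
  bddAway : ∀ j : Fin A.s, (j : ℕ) < A.s' → ∀ x ∈ A.cylClosed j,
    A.a j A.last + A.ρ ≤ g j x ∧ g j x ≤ A.b j A.last - A.ρ
  flat : ∀ j : Fin A.s, A.s' ≤ (j : ℕ) → ∀ x, g j x = A.b j A.last
  graph : ∀ j, A.r j '' (Ω ∩ A.V j) =
    {x | (∀ i, i ≠ A.last → (A.a j i < x i ∧ x i < A.b j i)) ∧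
         A.a j A.last < x A.last ∧ x A.last < g j x}

/-- `Ω` belongs to the class `C(A)`, with describing functions `g` -/
structure InAtlasClass {N : ℕ} (A : Atlas N) (Ω : Set (EV N))
    (g : Fin A.s → EV N → ℝ) : Prop where
  isOpen : IsOpen Ω
  cover : Ω ⊆ ⋃ j, innerPart (A.V j) A.ρ
  meets : ∀ j, (innerPart (A.V j) A.ρ ∩ Ω).Nonempty
  bdryMeets : ∀ j : Fin A.s, (j : ℕ) < A.s' → (A.V j ∩ frontier Ω).Nonempty
  bdryMisses : ∀ j : Fin A.s, A.s' ≤ (j : ℕ) → A.V j ∩ frontier Ω = ∅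
  describes : AtlasDescribes A Ω g

/-- the atlas distance `d_A`, computed from describing functions -/
def atlasDist {N : ℕ} (A : Atlas N) (g₁ g₂ : Fin A.s → EV N → ℝ) : ℝ :=
  sSup {d : ℝ | ∃ j, ∃ x ∈ A.cyl j, d = |g₁ j x - g₂ j x|}

/-- a modulus of continuity -/
structure IsModulus (ω : ℝ → ℝ) : Prop where
  cont : ContinuousOn ω (Ici 0)
  mono : MonotoneOn ω (Ici 0)
  zero : ω 0 = 0
  lin : ∃ k > 0, ∀ τ ∈ Icc (0:ℝ) 1, k * τ ≤ ω τ

/-- Euclidean distance between the projections of `x` and `y` onto the first `N-1`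
coordinates (in rotated coordinates) -/
def barDist {N : ℕ} (A : Atlas N) (x y : EV N) : ℝ :=
  Real.sqrt (∑ i ∈ Finset.univ.erase A.last, (x i - y i)^2)

/-- the describing functions satisfy the `ω`-modulus condition with constant `M`;
together with `InAtlasClass` this says `Ω ∈ C_M^{ω}(A)` -/
def HolderDescribed {N : ℕ} (A : Atlas N) (M : ℝ) (ω : ℝ → ℝ)
    (g : Fin A.s → EV N → ℝ) : Prop :=
  ∀ j, ∀ x ∈ A.cylClosed j, ∀ y ∈ A.cylClosed j,
    |g j x - g j y| ≤ M * ω (barDist A x y)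

/-- the deviation `sup_{x ∈ S} d(x,T)` -/
def devSet {N : ℕ} (S T : Set (EV N)) : ℝ :=
  sSup ((fun x => Metric.infDist x T) '' S)

/-- the lower Hausdorff–Pompeiu deviation -/
def lowerHP {N : ℕ} (S T : Set (EV N)) : ℝ := min (devSet S T) (devSet T S)

/-- the Hausdorff–Pompeiu distance -/
def upperHP {N : ℕ} (S T : Set (EV N)) : ℝ := max (devSet S T) (devSet T S)

/-- the open cylinder of the `j`-th chart for the derived atlas
`Ã = (ρ/2, s, s', {(V_j)_{ρ/2}}, {r_j})` (in rotated coordinates) -/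
def Atlas.cylSmall {N : ℕ} (A : Atlas N) (j : Fin A.s) : Set (EV N) :=
  {x | ∀ i, i ≠ A.last → (A.a j i + A.ρ/2 < x i ∧ x i < A.b j i - A.ρ/2)}

/-- the atlas distance `d_Ã` for the derived atlas, computed from describing functions -/
def atlasDistSmall {N : ℕ} (A : Atlas N) (g₁ g₂ : Fin A.s → EV N → ℝ) : ℝ :=
  sSup {d : ℝ | ∃ j, ∃ x ∈ A.cylSmall j, d = |g₁ j x - g₂ j x|}


/-! In a boundary chart both boundaries are graphs over the same base `W_j`. For the upper
bound, a boundary point `(x̄, g₁(x̄))` of `Ω₁` lies `ρ` deep in its chart, and the vertical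
point `(x̄, g₂(x̄))` is a boundary point of `Ω₂` at distance `|g₁(x̄) - g₂(x̄)|`, with `x̄` in
the base of the derived atlas. For the lower bound, if `∂Ω₂` is within `e ≤ ρ/4` of `∂Ω₁`,
the point of `∂Ω₁` nearest to `(x̄, g₂(x̄))` stays in the chart, hence is some `(ȳ, g₁(ȳ))`,
and `|g₁(x̄) - g₂(x̄)| ≤ |g₁(x̄) - g₁(ȳ)| + e ≤ M ω(e) + e ≤ (M + 1/k) ω(e)`. When `e` is
large, `d_Ã` is bounded by the heights of the charts, hence by a multiple of `ω(e)`, since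
`ω(e) ≥ ω(min(ρ/4, 1)) > 0`.
-/

namespace EuclideanSpace

variable {ι : Type*}

lemma abs_sub_apply_le_dist [Fintype ι] (x y : EuclideanSpace ℝ ι) (i : ι) :
    |x i - y i| ≤ dist x y := by
  simpa [Real.dist_eq] using PiLp.dist_apply_le x y i

lemma dist_add_single [Fintype ι] [DecidableEq ι] (x : EuclideanSpace ℝ ι) (i : ι) (t : ℝ) :
    dist x (x + single i t) = |t| := by
  simp [dist_eq_norm]

lemma add_single_apply_of_ne [DecidableEq ι] (x : EuclideanSpace ℝ ι) {i k : ι} (t : ℝ)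
    (hk : k ≠ i) :
    (x + single i t) k = x k := by
  simp [hk]

lemma add_single_apply_self [DecidableEq ι] (x : EuclideanSpace ℝ ι) (i : ι) (t : ℝ) :
    (x + single i t) i = x i + t := by
  simp

end EuclideanSpace

open EuclideanSpace

namespace IsometryEquiv

variable {α β : Type*} [PseudoEMetricSpace α] [PseudoEMetricSpace β]

lemma frontier_image (e : α ≃ᵢ β) (s : Set α) : frontier (e '' s) = e '' frontier s :=
  (e.toHomeomorph.image_frontier s).symm

lemma isOpen_image (e : α ≃ᵢ β) {s : Set α} (hs : IsOpen s) : IsOpen (e '' s) :=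
  e.toHomeomorph.isOpenMap _ hs

end IsometryEquiv

namespace Atlas

open Bornology

variable {N : ℕ} (A : Atlas N)

lemma barDist_le_dist (x y : EV N) : barDist A x y ≤ dist x y := by
  rw [barDist, EuclideanSpace.dist_eq]
  refine Real.sqrt_le_sqrt ?_
  calc ∑ i ∈ Finset.univ.erase A.last, (x i - y i) ^ 2
      ≤ ∑ i, (x i - y i) ^ 2 :=
        Finset.sum_le_sum_of_subset_of_nonneg (Finset.erase_subset _ _) fun _ _ _ => sq_nonneg _
    _ = ∑ i, dist (x i) (y i) ^ 2 := by simp [Real.dist_eq]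

lemma barDist_congr_left {x x' : EV N} (y : EV N) (h : ∀ i, i ≠ A.last → x i = x' i) :
    barDist A x y = barDist A x' y := by
  unfold barDist
  congr 1
  exact Finset.sum_congr rfl fun i hi => by rw [h i (Finset.ne_of_mem_erase hi)]

lemma box_eq_preimage_pi (j : Fin A.s) :
    A.box j = WithLp.ofLp ⁻¹' univ.pi fun i => Ioo (A.a j i) (A.b j i) := by
  ext x; simp [Atlas.box]

lemma isOpen_box (j : Fin A.s) : IsOpen (A.box j) := by
  rw [box_eq_preimage_pi]
  exact (isOpen_set_pi finite_univ fun _ _ => isOpen_Ioo).preimage (PiLp.continuous_ofLp 2 _)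

lemma closure_box (j : Fin A.s) :
    closure (A.box j) = WithLp.ofLp ⁻¹' univ.pi fun i => Icc (A.a j i) (A.b j i) := by
  rw [box_eq_preimage_pi]
  change closure (PiLp.homeomorph 2 _ ⁻¹' _) = PiLp.homeomorph 2 _ ⁻¹' _
  rw [← Homeomorph.preimage_closure, closure_pi_set]
  simp only [closure_Ioo (A.ab j _).ne]

lemma isBounded_box (j : Fin A.s) : IsBounded (A.box j) := by
  refine (IsCompact.isBounded ?_).subset subset_closure
  rw [closure_box]
  exact (PiLp.homeomorph 2 _).isCompact_preimage.mpr (isCompact_univ_pi fun _ => isCompact_Icc)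

lemma isOpen_V (j : Fin A.s) : IsOpen (A.V j) :=
  (A.r j).symm.toHomeomorph.isOpen_image.mpr (A.isOpen_box j)

lemma isBounded_V (j : Fin A.s) : IsBounded (A.V j) :=
  (A.r j).symm.isometry.lipschitz.isBounded_image (A.isBounded_box j)

lemma image_V (j : Fin A.s) : A.r j '' A.V j = A.box j := by
  simp [Atlas.V, image_image]

lemma isClosed_cylClosed (j : Fin A.s) : IsClosed (A.cylClosed j) := by
  simp only [Atlas.cylClosed, ofPred_forall]
  exact isClosed_iInter fun i => isClosed_iInter fun _ =>
    (isClosed_le continuous_const (PiLp.continuous_apply 2 _ i)).inter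
      (isClosed_le (PiLp.continuous_apply 2 _ i) continuous_const)

lemma closure_box_subset_cylClosed (j : Fin A.s) : closure (A.box j) ⊆ A.cylClosed j :=
  closure_minimal (fun _ hx i _ => ⟨(hx i).1.le, (hx i).2.le⟩) (A.isClosed_cylClosed j)

lemma cylSmall_subset_cyl (j : Fin A.s) : A.cylSmall j ⊆ A.cyl j := by
  intro x hx i hi
  have := A.ρpos
  constructor <;> linarith [hx i hi]

lemma cyl_subset_cylClosed (j : Fin A.s) : A.cyl j ⊆ A.cylClosed j :=
  fun _ hx i hi => ⟨(hx i hi).1.le, (hx i hi).2.le⟩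

lemma cylSmall_subset_cylClosed (j : Fin A.s) : A.cylSmall j ⊆ A.cylClosed j :=
  (A.cylSmall_subset_cyl j).trans (A.cyl_subset_cylClosed j)

end Atlas

section InnerPart

open Metric

variable {α : Type*} [PseudoMetricSpace α]

def closedInnerPart (V : Set α) (δ : ℝ) : Set α :=
  closure V ∩ {x | δ ≤ infDist x (frontier V)}

lemma isClosed_closedInnerPart (V : Set α) (δ : ℝ) : IsClosed (closedInnerPart V δ) :=
  isClosed_closure.inter (isClosed_le continuous_const (continuous_infDist_pt _))

lemma innerPart_subset_closedInnerPart {N : ℕ} (V : Set (EV N)) (δ : ℝ) :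
    innerPart V δ ⊆ closedInnerPart V δ :=
  fun _ hx => ⟨subset_closure hx.1, hx.2.le⟩

lemma closedInnerPart_subset {V : Set α} (hV : IsOpen V) {δ : ℝ} (hδ : 0 < δ) :
    closedInnerPart V δ ⊆ V := by
  rintro x ⟨hxcl, hxδ : δ ≤ _⟩
  by_contra hxV
  have hfr : x ∈ frontier V := by rw [hV.frontier_eq]; exact ⟨hxcl, hxV⟩
  rw [infDist_zero_of_mem hfr] at hxδ
  linarith

end InnerPart

namespace Atlas

open Metric

variable {N : ℕ} (A : Atlas N)

lemma add_single_mem_frontier_box {j : Fin A.s} {y : EV N} (hy : y ∈ A.box j) (i : Fin N)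
    {c : ℝ} (hc : c = A.a j i ∨ c = A.b j i) :
    y + single i (c - y i) ∈ frontier (A.box j) := by
  have hci : (y + single i (c - y i)) i = c := by
    rw [add_single_apply_self]; ring
  rw [(A.isOpen_box j).frontier_eq, closure_box]
  refine ⟨fun k _ => ?_, fun hmem => ?_⟩
  · by_cases hk : k = i
    · subst hk
      rw [hci]
      rcases hc with rfl | rfl
      exacts [⟨le_rfl, (A.ab j k).le⟩, ⟨(A.ab j k).le, le_rfl⟩]
    · rw [add_single_apply_of_ne _ _ hk]
      exact ⟨(hy k).1.le, (hy k).2.le⟩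
  · have := hmem i
    rw [hci] at this
    rcases hc with rfl | rfl
    exacts [lt_irrefl _ this.1, lt_irrefl _ this.2]

lemma coord_bounds_of_le_infDist_frontier {j : Fin A.s} {y : EV N} (hy : y ∈ A.box j) {δ : ℝ}
    (hδ : δ ≤ infDist y (frontier (A.box j))) (i : Fin N) :
    A.a j i + δ ≤ y i ∧ y i ≤ A.b j i - δ := by
  have key : ∀ c, (c = A.a j i ∨ c = A.b j i) → δ ≤ |c - y i| := fun c hc =>
    calc δ ≤ infDist y (frontier (A.box j)) := hδ
      _ ≤ _ := infDist_le_dist_of_mem (A.add_single_mem_frontier_box hy i hc)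
      _ = |c - y i| := dist_add_single _ _ _
  have ha := key _ (Or.inl rfl)
  have hb := key _ (Or.inr rfl)
  rw [abs_of_neg (sub_neg.mpr (hy i).1)] at ha
  rw [abs_of_pos (sub_pos.mpr (hy i).2)] at hb
  constructor <;> linarith

lemma coord_bounds_of_mem_closedInnerPart {j : Fin A.s} {x : EV N}
    (hx : x ∈ closedInnerPart (A.V j) A.ρ) (i : Fin N) :
    A.a j i + A.ρ ≤ A.r j x i ∧ A.r j x i ≤ A.b j i - A.ρ := by
  have hxV := closedInnerPart_subset (A.isOpen_V j) A.ρpos hx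
  refine A.coord_bounds_of_le_infDist_frontier (A.image_V j ▸ mem_image_of_mem _ hxV) ?_ i
  have hfr : frontier (A.box j) = A.r j '' frontier (A.V j) := by
    rw [← A.image_V j]; exact ((A.r j).toHomeomorph.image_frontier _).symm
  rw [hfr, infDist_image (A.r j).isometry]
  exact hx.2

end Atlas

namespace AtlasDescribes

variable {N : ℕ} {A : Atlas N} {Ω : Set (EV N)} {g : Fin A.s → EV N → ℝ}

lemma mem_image_iff (hd : AtlasDescribes A Ω g) {j : Fin A.s} {y : EV N} (hy : y ∈ A.box j) :
    y ∈ A.r j '' Ω ↔ y A.last < g j y := by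
  have h := hd.graph j
  rw [image_inter (A.r j).injective, A.image_V j] at h
  have hmem : y ∈ A.r j '' Ω ↔ y ∈ A.r j '' Ω ∩ A.box j := ⟨fun h => ⟨h, hy⟩, And.left⟩
  rw [hmem, h]
  exact ⟨fun h => h.2.2, fun h => ⟨fun i _ => hy i, (hy A.last).1, h⟩⟩

lemma apply_add_single_last (hd : AtlasDescribes A Ω g) (j : Fin A.s) (y : EV N) (t : ℝ) :
    g j (y + single A.last t) = g j y :=
  hd.barOnly j _ _ fun _ hi => add_single_apply_of_ne _ _ hi

lemma apply_last_eq_of_mem_frontier (hop : IsOpen Ω) (hd : AtlasDescribes A Ω g)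
    {j : Fin A.s} {y : EV N} (hfr : y ∈ frontier (A.r j '' Ω)) (hy : y ∈ A.box j) :
    y A.last = g j y := by
  rw [((A.r j).isOpen_image hop).frontier_eq] at hfr
  refine le_antisymm ?_ (not_lt.mp fun h => hfr.2 ((hd.mem_image_iff hy).mpr h))
  have hcl : closure (A.r j '' Ω ∩ A.box j) ⊆ A.cylClosed j :=
    (closure_mono inter_subset_right).trans (A.closure_box_subset_cylClosed j)
  refine le_on_closure (fun z hz => ((hd.mem_image_iff hz.2).mp hz.1).le)
    ((PiLp.continuous_apply 2 _ _).continuousOn) ((hd.cont j).mono hcl) ?_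
  rw [inter_comm]
  exact (A.isOpen_box j).inter_closure ⟨hy, hfr.1⟩

lemma add_single_mem_frontier (hop : IsOpen Ω) (hd : AtlasDescribes A Ω g) {j : Fin A.s}
    (hj : (j : ℕ) < A.s') {y : EV N} (hy : y ∈ A.cyl j) :
    y + single A.last (g j y - y A.last) ∈ frontier (A.r j '' Ω) := by
  have hbd := hd.bddAway j hj y (A.cyl_subset_cylClosed j hy)
  have hρ := A.ρpos
  set f : ℝ → EV N := fun t => y + single A.last (g j y - y A.last - t)
  have hf_last : ∀ t, f t A.last = g j y - t := fun t => by
    simp only [f, add_single_apply_self]; ring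
  have hf_box : ∀ t, 0 ≤ t → t < A.ρ → f t ∈ A.box j := fun t ht₀ ht₁ i => by
    by_cases hi : i = A.last
    · subst hi; rw [hf_last]; constructor <;> linarith
    · simp only [f, add_single_apply_of_ne _ _ hi]; exact hy i hi
  have hf_g : ∀ t, g j (f t) = g j y := fun t => hd.apply_add_single_last j y _
  have hf_cont : Continuous f := continuous_const.add <|
    ((PiLp.continuous_toLp 2 _).comp (continuous_single (A := fun _ : Fin N => ℝ) _)).comp
      (continuous_const.sub continuous_id)
  rw [((A.r j).isOpen_image hop).frontier_eq]
  refine ⟨?_, fun hmem => ?_⟩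
  · have h0 : (0 : ℝ) ∈ closure (Ioo 0 A.ρ) := by rw [closure_Ioo hρ.ne]; exact ⟨le_rfl, hρ.le⟩
    simpa [f] using hf_cont.continuousWithinAt.mem_closure h0 fun t ht =>
      (hd.mem_image_iff (hf_box t ht.1.le ht.2)).mpr (by rw [hf_g, hf_last]; linarith [ht.1])
  · have h := (hd.mem_image_iff (by simpa [f] using hf_box 0 le_rfl hρ)).mp hmem
    have := hf_last 0
    simp only [f, sub_zero] at this h
    rw [hd.apply_add_single_last, this] at h
    exact lt_irrefl _ h

end AtlasDescribes

namespace InAtlasClass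

open Metric Bornology

variable {N : ℕ} {A : Atlas N} {Ω : Set (EV N)} {g : Fin A.s → EV N → ℝ}

lemma frontier_subset_iUnion (hΩ : InAtlasClass A Ω g) :
    frontier Ω ⊆ ⋃ j, closedInnerPart (A.V j) A.ρ :=
  frontier_subset_closure.trans <| closure_minimal
    (hΩ.cover.trans <| iUnion_mono fun _ => innerPart_subset_closedInnerPart _ _)
    (isClosed_iUnion_of_finite fun _ => isClosed_closedInnerPart _ _)

lemma isCompact_frontier (hΩ : InAtlasClass A Ω g) : IsCompact (frontier Ω) := by
  refine isCompact_of_isClosed_isBounded isClosed_frontier ?_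
  refine (isBounded_iUnion.mpr fun j => A.isBounded_V j).subset
    (hΩ.frontier_subset_iUnion.trans <| iUnion_mono fun j => ?_)
  exact closedInnerPart_subset (A.isOpen_V j) A.ρpos

lemma exists_chart_of_mem_frontier (hΩ : InAtlasClass A Ω g) {x : EV N}
    (hx : x ∈ frontier Ω) :
    ∃ j : Fin A.s, (j : ℕ) < A.s' ∧
      ∀ i, A.a j i + A.ρ ≤ A.r j x i ∧ A.r j x i ≤ A.b j i - A.ρ := by
  obtain ⟨j, hj⟩ := mem_iUnion.mp (hΩ.frontier_subset_iUnion hx)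
  refine ⟨j, not_le.mp fun hs' => ?_, A.coord_bounds_of_mem_closedInnerPart hj⟩
  exact (hΩ.bdryMisses j hs').subset ⟨closedInnerPart_subset (A.isOpen_V j) A.ρpos hj, hx⟩

end InAtlasClass

lemma IsModulus.nonneg {ω : ℝ → ℝ} (hω : IsModulus ω) {t : ℝ} (ht : 0 ≤ t) : 0 ≤ ω t :=
  hω.zero ▸ hω.mono self_mem_Ici ht ht

section Deviation

open Metric Bornology

variable {N : ℕ}

lemma devSet_nonneg (S T : Set (EV N)) : 0 ≤ devSet S T :=
  Real.sSup_nonneg <| by rintro _ ⟨x, _, rfl⟩; exact infDist_nonneg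

lemma devSet_le {S T : Set (EV N)} {c : ℝ} (hc : 0 ≤ c) (h : ∀ x ∈ S, infDist x T ≤ c) :
    devSet S T ≤ c :=
  Real.sSup_le (by rintro _ ⟨x, hx, rfl⟩; exact h x hx) hc

lemma infDist_le_devSet {S T : Set (EV N)} (hS : IsBounded S) {x : EV N} (hx : x ∈ S) :
    infDist x T ≤ devSet S T :=
  le_csSup ((lipschitz_infDist_pt T).isBounded_image hS).bddAbove (mem_image_of_mem _ hx)

end Deviation

def Atlas.totalHeight {N : ℕ} (A : Atlas N) : ℝ := ∑ j, (A.b j A.last - A.a j A.last)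

lemma Atlas.height_le_totalHeight {N : ℕ} (A : Atlas N) (j : Fin A.s) :
    A.b j A.last - A.a j A.last ≤ A.totalHeight :=
  Finset.single_le_sum (fun j' _ => (sub_pos.mpr (A.ab j' A.last)).le) (Finset.mem_univ j)

lemma Atlas.totalHeight_nonneg {N : ℕ} (A : Atlas N) : 0 ≤ A.totalHeight :=
  Finset.sum_nonneg fun j _ => (sub_pos.mpr (A.ab j A.last)).le

section AtlasDistance

variable {N : ℕ} {A : Atlas N} {Ω₁ Ω₂ : Set (EV N)} {g₁ g₂ : Fin A.s → EV N → ℝ}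

lemma AtlasDescribes.apply_mem_Icc {Ω : Set (EV N)} {g : Fin A.s → EV N → ℝ}
    (hd : AtlasDescribes A Ω g) {j : Fin A.s} {x : EV N} (hx : x ∈ A.cylClosed j) :
    g j x ∈ Icc (A.a j A.last) (A.b j A.last) := by
  by_cases hj : (j : ℕ) < A.s'
  · have h := hd.bddAway j hj x hx
    have := A.ρpos
    constructor <;> linarith
  · rw [hd.flat j (not_lt.mp hj)]
    exact ⟨(A.ab j A.last).le, le_rfl⟩

lemma abs_sub_le_totalHeight (hd₁ : AtlasDescribes A Ω₁ g₁) (hd₂ : AtlasDescribes A Ω₂ g₂)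
    {j : Fin A.s} {x : EV N} (hx : x ∈ A.cylClosed j) :
    |g₁ j x - g₂ j x| ≤ A.totalHeight := by
  have h₁ := hd₁.apply_mem_Icc hx
  have h₂ := hd₂.apply_mem_Icc hx
  refine (abs_sub_le_iff.mpr ⟨?_, ?_⟩).trans (A.height_le_totalHeight j) <;>
    linarith [h₁.1, h₁.2, h₂.1, h₂.2]

lemma atlasDistSmall_comm (g₁ g₂ : Fin A.s → EV N → ℝ) :
    atlasDistSmall A g₁ g₂ = atlasDistSmall A g₂ g₁ := by
  simp only [atlasDistSmall, abs_sub_comm]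

lemma atlasDistSmall_nonneg (g₁ g₂ : Fin A.s → EV N → ℝ) : 0 ≤ atlasDistSmall A g₁ g₂ :=
  Real.sSup_nonneg <| by rintro _ ⟨j, x, hx, rfl⟩; exact abs_nonneg _

lemma atlasDistSmall_le {c : ℝ} (hc : 0 ≤ c)
    (h : ∀ j, ∀ x ∈ A.cylSmall j, |g₁ j x - g₂ j x| ≤ c) : atlasDistSmall A g₁ g₂ ≤ c :=
  Real.sSup_le (by rintro _ ⟨j, x, hx, rfl⟩; exact h j x hx) hc

lemma atlasDistSmall_le_totalHeight (hd₁ : AtlasDescribes A Ω₁ g₁)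
    (hd₂ : AtlasDescribes A Ω₂ g₂) : atlasDistSmall A g₁ g₂ ≤ A.totalHeight :=
  atlasDistSmall_le A.totalHeight_nonneg fun j _ hx =>
    abs_sub_le_totalHeight hd₁ hd₂ (A.cylSmall_subset_cylClosed j hx)

lemma abs_sub_le_atlasDistSmall (hd₁ : AtlasDescribes A Ω₁ g₁) (hd₂ : AtlasDescribes A Ω₂ g₂)
    {j : Fin A.s} {x : EV N} (hx : x ∈ A.cylSmall j) :
    |g₁ j x - g₂ j x| ≤ atlasDistSmall A g₁ g₂ :=
  le_csSup ⟨A.totalHeight, by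
    rintro _ ⟨j, x, hx, rfl⟩
    exact abs_sub_le_totalHeight hd₁ hd₂ (A.cylSmall_subset_cylClosed j hx)⟩
    ⟨j, x, hx, rfl⟩

end AtlasDistance

section Comparison

open Metric

variable {N : ℕ} {A : Atlas N} {Ω₁ Ω₂ : Set (EV N)} {g₁ g₂ : Fin A.s → EV N → ℝ}

lemma devSet_frontier_le_atlasDistSmall (hΩ₁ : InAtlasClass A Ω₁ g₁)
    (hΩ₂ : InAtlasClass A Ω₂ g₂) :
    devSet (frontier Ω₁) (frontier Ω₂) ≤ atlasDistSmall A g₁ g₂ := by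
  refine devSet_le (atlasDistSmall_nonneg g₁ g₂) fun x hx => ?_
  obtain ⟨j, hj, hx_bd⟩ := hΩ₁.exists_chart_of_mem_frontier hx
  set y := A.r j x
  have hρ := A.ρpos
  have hy_box : y ∈ A.box j := fun i => by constructor <;> linarith [hx_bd i]
  have hy_cyl : y ∈ A.cylSmall j := fun i _ => by constructor <;> linarith [hx_bd i]
  have hy_graph : y A.last = g₁ j y :=
    hΩ₁.describes.apply_last_eq_of_mem_frontier hΩ₁.isOpen
      (by rw [IsometryEquiv.frontier_image]; exact mem_image_of_mem _ hx) hy_box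
  have hp :=
    hΩ₂.describes.add_single_mem_frontier hΩ₂.isOpen hj (A.cylSmall_subset_cyl j hy_cyl)
  rw [IsometryEquiv.frontier_image] at hp
  obtain ⟨x₂, hx₂, hx₂p⟩ := hp
  calc infDist x (frontier Ω₂) ≤ dist x x₂ := infDist_le_dist_of_mem hx₂
    _ = dist y (A.r j x₂) := ((A.r j).dist_eq x x₂).symm
    _ = |g₁ j y - g₂ j y| := by rw [hx₂p, dist_add_single, hy_graph, abs_sub_comm]
    _ ≤ atlasDistSmall A g₁ g₂ := abs_sub_le_atlasDistSmall hΩ₁.describes hΩ₂.describes hy_cyl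

lemma abs_sub_le_of_devSet_frontier_le {ω : ℝ → ℝ} (hω : IsModulus ω) {M : ℝ} (hM : 0 ≤ M)
    (hΩ₁ : InAtlasClass A Ω₁ g₁) (hg₁ : HolderDescribed A M ω g₁) (hΩ₂ : InAtlasClass A Ω₂ g₂)
    (he : devSet (frontier Ω₂) (frontier Ω₁) ≤ A.ρ / 4) {j : Fin A.s} (hj : (j : ℕ) < A.s')
    {x : EV N} (hx : x ∈ A.cylSmall j) :
    |g₁ j x - g₂ j x| ≤ M * ω (devSet (frontier Ω₂) (frontier Ω₁)) +
      devSet (frontier Ω₂) (frontier Ω₁) := by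
  set e := devSet (frontier Ω₂) (frontier Ω₁)
  set p := x + single A.last (g₂ j x - x A.last)
  have hp_last : p A.last = g₂ j x := by simp [p]
  have hp_bar : ∀ i, i ≠ A.last → p i = x i := fun i hi => add_single_apply_of_ne _ _ hi
  have hp := hΩ₂.describes.add_single_mem_frontier hΩ₂.isOpen hj (A.cylSmall_subset_cyl j hx)
  rw [IsometryEquiv.frontier_image] at hp
  obtain ⟨x₂, hx₂, hx₂p : A.r j x₂ = p⟩ := hp
  obtain ⟨z, -, hz⟩ := hΩ₁.bdryMeets j hj
  obtain ⟨q, hq, hx₂q⟩ := hΩ₁.isCompact_frontier.exists_infDist_eq_dist ⟨z, hz⟩ x₂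
  set y := A.r j q
  have hpy : dist p y ≤ e := by
    rw [← hx₂p, (A.r j).dist_eq, ← hx₂q]
    exact infDist_le_devSet hΩ₂.isCompact_frontier.isBounded hx₂
  have hcoord : ∀ i, |y i - p i| ≤ e := fun i =>
    (abs_sub_apply_le_dist y p i).trans (dist_comm y p ▸ hpy)
  have hy_box : y ∈ A.box j := fun i => by
    have hρ := A.ρpos
    have hi := abs_le.mp (hcoord i)
    by_cases hil : i = A.last
    · subst hil
      have := hΩ₂.describes.bddAway j hj x
        (A.cylSmall_subset_cylClosed j hx)
      rw [hp_last] at hi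
      constructor <;> linarith
    · rw [hp_bar i hil] at hi
      constructor <;> linarith [hx i hil]
  have hy_graph : y A.last = g₁ j y :=
    hΩ₁.describes.apply_last_eq_of_mem_frontier hΩ₁.isOpen
      (by rw [IsometryEquiv.frontier_image]; exact mem_image_of_mem _ hq) hy_box
  have hbar : barDist A x y ≤ e := by
    rw [A.barDist_congr_left y fun i hi => (hp_bar i hi).symm]
    exact (A.barDist_le_dist p y).trans hpy
  have hxy : |g₁ j x - g₁ j y| ≤ M * ω e :=
    (hg₁ j x (A.cylSmall_subset_cylClosed j hx) y
      (A.closure_box_subset_cylClosed j (subset_closure hy_box))).trans <|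
      mul_le_mul_of_nonneg_left (hω.mono (Real.sqrt_nonneg _) (devSet_nonneg _ _) hbar) hM
  calc |g₁ j x - g₂ j x| ≤ |g₁ j x - g₁ j y| + |g₁ j y - g₂ j x| := abs_sub_le _ _ _
    _ ≤ M * ω e + e := add_le_add hxy (by rw [← hy_graph, ← hp_last]; exact hcoord A.last)

lemma atlasDistSmall_le_of_devSet_frontier_le {ω : ℝ → ℝ} (hω : IsModulus ω) {M : ℝ}
    (hM : 0 ≤ M) (hΩ₁ : InAtlasClass A Ω₁ g₁) (hg₁ : HolderDescribed A M ω g₁)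
    (hΩ₂ : InAtlasClass A Ω₂ g₂) (he : devSet (frontier Ω₂) (frontier Ω₁) ≤ A.ρ / 4) :
    atlasDistSmall A g₁ g₂ ≤ M * ω (devSet (frontier Ω₂) (frontier Ω₁)) +
      devSet (frontier Ω₂) (frontier Ω₁) := by
  have he₀ := devSet_nonneg (frontier Ω₂) (frontier Ω₁)
  refine atlasDistSmall_le (add_nonneg (mul_nonneg hM (hω.nonneg he₀)) he₀) fun j x hx => ?_
  by_cases hj : (j : ℕ) < A.s'
  · exact abs_sub_le_of_devSet_frontier_le hω hM hΩ₁ hg₁ hΩ₂ he hj hx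
  · rw [hΩ₁.describes.flat j (not_lt.mp hj), hΩ₂.describes.flat j (not_lt.mp hj), sub_self,
      abs_zero]
    exact add_nonneg (mul_nonneg hM (hω.nonneg he₀)) he₀

lemma atlasDistSmall_le_of_lowerHP_frontier_le {ω : ℝ → ℝ} (hω : IsModulus ω) {M : ℝ}
    (hM : 0 ≤ M) (hΩ₁ : InAtlasClass A Ω₁ g₁) (hg₁ : HolderDescribed A M ω g₁)
    (hΩ₂ : InAtlasClass A Ω₂ g₂) (hg₂ : HolderDescribed A M ω g₂)
    (hd : lowerHP (frontier Ω₁) (frontier Ω₂) ≤ A.ρ / 4) :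
    atlasDistSmall A g₁ g₂ ≤ M * ω (lowerHP (frontier Ω₁) (frontier Ω₂)) +
      lowerHP (frontier Ω₁) (frontier Ω₂) := by
  rcases min_choice (devSet (frontier Ω₁) (frontier Ω₂)) (devSet (frontier Ω₂) (frontier Ω₁))
    with h | h <;> rw [lowerHP, h] at hd ⊢
  · rw [atlasDistSmall_comm]
    exact atlasDistSmall_le_of_devSet_frontier_le hω hM hΩ₂ hg₂ hΩ₁ hd
  · exact atlasDistSmall_le_of_devSet_frontier_le hω hM hΩ₁ hg₁ hΩ₂ hd

end Comparison

theorem atlas_distance_vs_hausdorff_general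
    (N : ℕ) (A : Atlas N) (ω : ℝ → ℝ) (hω : IsModulus ω)
    (M : ℝ) (hM : 0 < M) :
    ∃ c : ℝ, 0 < c ∧
      ∀ (Ω₁ Ω₂ : Set (EV N)) (g₁ g₂ : Fin A.s → EV N → ℝ),
        InAtlasClass A Ω₁ g₁ → HolderDescribed A M ω g₁ →
        InAtlasClass A Ω₂ g₂ → HolderDescribed A M ω g₂ →
        upperHP (frontier Ω₁) (frontier Ω₂) ≤ atlasDistSmall A g₁ g₂ ∧
        atlasDistSmall A g₁ g₂ ≤ c * ω (lowerHP (frontier Ω₁) (frontier Ω₂)) := by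
  obtain ⟨k, hk, hlin⟩ := hω.lin
  set δ := min (A.ρ / 4) 1
  have hδ : 0 < δ := lt_min (by linarith [A.ρpos]) one_pos
  have hωδ : 0 < ω δ := (mul_pos hk hδ).trans_le (hlin δ ⟨hδ.le, min_le_right _ _⟩)
  have hH := A.totalHeight_nonneg
  refine ⟨M + 1 / k + A.totalHeight / ω δ, by positivity,
    fun Ω₁ Ω₂ g₁ g₂ hΩ₁ hg₁ hΩ₂ hg₂ => ⟨max_le (devSet_frontier_le_atlasDistSmall hΩ₁ hΩ₂)
      (atlasDistSmall_comm g₁ g₂ ▸ devSet_frontier_le_atlasDistSmall hΩ₂ hΩ₁), ?_⟩⟩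
  set d := lowerHP (frontier Ω₁) (frontier Ω₂)
  have hd : 0 ≤ d := le_min (devSet_nonneg _ _) (devSet_nonneg _ _)
  have hωd := hω.nonneg hd
  rcases le_or_gt d δ with hdδ | hδd
  · have hdk : d ≤ ω d / k := by
      rw [le_div_iff₀ hk]; linarith [hlin d ⟨hd, hdδ.trans (min_le_right _ _)⟩]
    calc atlasDistSmall A g₁ g₂ ≤ M * ω d + d :=
          atlasDistSmall_le_of_lowerHP_frontier_le hω hM.le hΩ₁ hg₁ hΩ₂ hg₂
            (hdδ.trans (min_le_left _ _))
      _ ≤ (M + 1 / k) * ω d := by rw [add_mul, one_div_mul_eq_div]; linarith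
      _ ≤ _ := mul_le_mul_of_nonneg_right
          (by simp only [le_add_iff_nonneg_right]; positivity) hωd
  · calc atlasDistSmall A g₁ g₂ ≤ A.totalHeight :=
          atlasDistSmall_le_totalHeight hΩ₁.describes hΩ₂.describes
      _ = A.totalHeight / ω δ * ω δ := (div_mul_cancel₀ _ hωδ.ne').symm
      _ ≤ A.totalHeight / ω δ * ω d :=
          mul_le_mul_of_nonneg_left (hω.mono hδ.le hd hδd.le) (by positivity)
      _ ≤ _ := mul_le_mul_of_nonneg_right
          (by simp only [le_add_iff_nonneg_left]; positivity) hωd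

/-- comparison between the atlas distance of the derived atlas and the
Hausdorff–Pompeiu distance/deviation of the boundaries, on `C_M^ω(A)`. -/
theorem atlas_distance_vs_hausdorff
    (N : ℕ) (hN : 2 ≤ N) (A : Atlas N) (ω : ℝ → ℝ) (hω : IsModulus ω)
    (M : ℝ) (hM : 0 < M) :
    ∃ c : ℝ, 0 < c ∧
      ∀ (Ω₁ Ω₂ : Set (EV N)) (g₁ g₂ : Fin A.s → EV N → ℝ),
        InAtlasClass A Ω₁ g₁ → HolderDescribed A M ω g₁ →
        InAtlasClass A Ω₂ g₂ → HolderDescribed A M ω g₂ →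
        upperHP (frontier Ω₁) (frontier Ω₂) ≤ atlasDistSmall A g₁ g₂ ∧
        atlasDistSmall A g₁ g₂ ≤ c * ω (lowerHP (frontier Ω₁) (frontier Ω₂)) :=
  atlas_distance_vs_hausdorff_general N A ω hω M hM
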